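/- The n-qubit bilinear form ⟨·,·⟩ₙ is symmetric for even n and antisymmetric for odd n: for all n-qubit states a, b, one has ⟨a,b⟩ₙ = (−1)ⁿ ⟨b,a⟩ₙ. -/

import Mathlib

/-- The `n`-qubit bilinear form `⟨a,b⟩ₙ = Σ_s (−1)^{wt(s)} a(s) b(s̄)`, where the sum runs
over bit strings `s : Fin n → Fin 2`, `wt(s)` is the Hamming weight and `s̄` the bitwise
flip of `s`. -/
noncomputable def nBilin (n : ℕ) (a b : (Fin n → Fin 2) → ℂ) : ℂ :=
  ∑ s : Fin n → Fin 2, (-1 : ℂ) ^ (∑ i, (s i : ℕ)) * a s * b (fun i => 1 - s i)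

lemma fin2_flip_flip (x : Fin 2) : 1 - (1 - x) = x := by fin_cases x <;> rfl

lemma wt_flip_aux (x : Fin 2) : (x : ℕ) + ((1 - x : Fin 2) : ℕ) = 1 := by fin_cases x <;> rfl

lemma wt_add_wt_flip {n : ℕ} (s : Fin n → Fin 2) :
    (∑ i, (s i : ℕ)) + (∑ i, ((1 - s i : Fin 2) : ℕ)) = n := by
  rw [← Finset.sum_add_distrib]
  rw [Finset.sum_congr rfl (fun i _ => wt_flip_aux (s i))]
  simp

/-- The `n`-qubit bilinear form is symmetric for even `n` and antisymmetric for odd `n`: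
`⟨a,b⟩ₙ = (−1)ⁿ ⟨b,a⟩ₙ`. -/
theorem nBilin_symm_antisymm :
    ∀ (n : ℕ) (a b : (Fin n → Fin 2) → ℂ),
      nBilin n a b = (-1 : ℂ) ^ n * nBilin n b a := by
  intro n a b
  unfold nBilin
  rw [Finset.mul_sum]
  apply Fintype.sum_equiv
    (Function.Involutive.toPerm (fun s : Fin n → Fin 2 => fun i => 1 - s i)
      (fun s => by funext i; exact fin2_flip_flip (s i)))
  intro s
  show (-1 : ℂ) ^ (∑ i, (s i : ℕ)) * a s * b (fun i => 1 - s i) = (-1 : ℂ) ^ n *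
    ((-1 : ℂ) ^ (∑ i, ((1 - s i : Fin 2) : ℕ)) * b (fun i => 1 - s i) * a (fun i => 1 - (1 - s i)))
  have hff : (fun i => 1 - (1 - s i)) = s := funext fun i => fin2_flip_flip (s i)
  rw [hff]
  have h := wt_add_wt_flip s
  have : (-1 : ℂ) ^ (∑ i, (s i : ℕ)) * (-1 : ℂ) ^ (∑ i, ((1 - s i : Fin 2) : ℕ))
      = (-1 : ℂ) ^ n := by rw [← pow_add, h]
  rw [← this]
  ring_nf
  rw [pow_mul']
  norm_num
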